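/- arXiv:2502.09299 — 3 statements merged into one kernel-verified Lean document; each statement's English description precedes it below -/
import Mathlib

section
/- Any bijection between finite equal-cardinality sets S, T ⊆ ℤ² that moves every point weakly downward within its own column (preserving x-coordinate and weakly decreasing y-coordinate) is a minimum-weight perfect matching with respect to L1 distance. -/
/-! The vertical displacement `∑ (s.2 - (g s).2)` of a bijection `g : S → T` is
`∑_S y - ∑_T y`, the same for every bijection, and it is a lower bound for the L1 weight
of `g`. A columnwise downward bijection attains this bound. -/

/-- L1 (Manhattan) distance on ℤ². -/
def L1 (a b : ℤ × ℤ) : ℤ := |a.1 - b.1| + |a.2 - b.2|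

theorem L1_eq_sub_snd_of_fst_eq {a b : ℤ × ℤ} (h₁ : a.1 = b.1) (h₂ : b.2 ≤ a.2) :
    L1 a b = a.2 - b.2 := by
  rw [L1, h₁, sub_self, abs_zero, zero_add, abs_of_nonneg (sub_nonneg.mpr h₂)]

theorem sub_snd_le_L1 (a b : ℤ × ℤ) : a.2 - b.2 ≤ L1 a b :=
  (le_abs_self _).trans (le_add_of_nonneg_left (abs_nonneg _))

theorem Fintype.sum_sub_comp_of_bijective {α β M : Type*} [Fintype α] [Fintype β]
    [AddCommGroup M] (u : α → M) (v : β → M) {g : α → β} (hg : Function.Bijective g) :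
    ∑ a, (u a - v (g a)) = ∑ a, u a - ∑ b, v b := by
  rw [Finset.sum_sub_distrib, Fintype.sum_bijective g hg _ _ fun _ => rfl]

theorem downward_bijection_is_mwpm_general (S T : Finset (ℤ × ℤ))
    (f : S → T) (hf : Function.Bijective f)
    (hcol : ∀ s : S, ((f s : ℤ × ℤ)).1 = (s : ℤ × ℤ).1)
    (hdown : ∀ s : S, ((f s : ℤ × ℤ)).2 ≤ (s : ℤ × ℤ).2) :
    ∀ g : S → T, Function.Bijective g →
      ∑ s : S, L1 (s : ℤ × ℤ) (f s : ℤ × ℤ) ≤ ∑ s : S, L1 (s : ℤ × ℤ) (g s : ℤ × ℤ) := by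
  intro g hg
  calc ∑ s : S, L1 (s : ℤ × ℤ) (f s : ℤ × ℤ)
      = ∑ s : S, ((s : ℤ × ℤ).2 - (f s : ℤ × ℤ).2) :=
        Finset.sum_congr rfl fun s _ => L1_eq_sub_snd_of_fst_eq (hcol s).symm (hdown s)
    _ = ∑ s : S, ((s : ℤ × ℤ).2 - (g s : ℤ × ℤ).2) := by
        rw [Fintype.sum_sub_comp_of_bijective _ (fun t : T => (t : ℤ × ℤ).2) hf,
          Fintype.sum_sub_comp_of_bijective _ (fun t : T => (t : ℤ × ℤ).2) hg]
    _ ≤ ∑ s : S, L1 (s : ℤ × ℤ) (g s : ℤ × ℤ) :=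
        Finset.sum_le_sum fun s _ => sub_snd_le_L1 _ _

theorem downward_bijection_is_mwpm (S T : Finset (ℤ × ℤ)) (hcard : S.card = T.card)
    (f : S → T) (hf : Function.Bijective f)
    (hcol : ∀ s : S, ((f s : ℤ × ℤ)).1 = (s : ℤ × ℤ).1)
    (hdown : ∀ s : S, ((f s : ℤ × ℤ)).2 ≤ (s : ℤ × ℤ).2) :
    ∀ g : S → T, Function.Bijective g →
      ∑ s : S, L1 (s : ℤ × ℤ) (f s : ℤ × ℤ) ≤ ∑ s : S, L1 (s : ℤ × ℤ) (g s : ℤ × ℤ) :=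
  downward_bijection_is_mwpm_general S T f hf hcol hdown
end

section
/- A 2-scaled polyomino has no cut vertices: if a finite connected subset P of ℤ² is a union of disjoint 2×2 blocks aligned to the even grid (i.e., P is the preimage under the map (x,y) ↦ (⌊x/2⌋,⌊y/2⌋) of a connected set Q of cells), then for every tile p ∈ P, the set P \ {p} is still connected in the grid adjacency. -/
/-- Grid adjacency on ℤ²: cells differ by 1 in exactly one coordinate. -/
def GridAdj (p q : ℤ × ℤ) : Prop :=
  (|p.1 - q.1| = 1 ∧ p.2 = q.2) ∨ (p.1 = q.1 ∧ |p.2 - q.2| = 1)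

/-- A set of cells is connected under grid adjacency. -/
def GridConnected (P : Set (ℤ × ℤ)) : Prop :=
  ∀ p ∈ P, ∀ q ∈ P,
    Relation.ReflTransGen (fun a b => a ∈ P ∧ b ∈ P ∧ GridAdj a b) p q

/-- The 2-scaled version of a cell set. -/
def Scaled (Q : Set (ℤ × ℤ)) : Set (ℤ × ℤ) :=
  {p | ∃ a b i j : ℤ, (a, b) ∈ Q ∧ (i = 0 ∨ i = 1) ∧ (j = 0 ∨ j = 1) ∧
    p = (2 * a + i, 2 * b + j)}

/-!
Every cell of `Scaled Q` other than `p` reaches, inside its 2×2 block, the corner whose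
coordinates both differ in parity from those of `p`; two such corners of neighbouring blocks are
joined along a row (or column) of that parity, which avoids `p`. Lifting a path of `Q` block by
block then joins any two cells of `Scaled Q \ {p}`.
-/

open Relation

def GridStep (P : Set (ℤ × ℤ)) (a b : ℤ × ℤ) : Prop :=
  a ∈ P ∧ b ∈ P ∧ GridAdj a b

theorem GridAdj.symm {a b : ℤ × ℤ} (h : GridAdj a b) : GridAdj b a := by
  rcases h with ⟨h₁, h₂⟩ | ⟨h₁, h₂⟩
  · exact Or.inl ⟨by rwa [abs_sub_comm], h₂.symm⟩
  · exact Or.inr ⟨h₁.symm, by rwa [abs_sub_comm]⟩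

instance (P : Set (ℤ × ℤ)) : Std.Symm (GridStep P) where
  symm _ _ h := ⟨h.2.1, h.1, h.2.2.symm⟩

section Steps

variable {P : Set (ℤ × ℤ)}

theorem GridStep.reflTransGen_horizontal {x x' y : ℤ} (h : (x, y) ∈ P) (h' : (x', y) ∈ P)
    (hx : |x - x'| ≤ 1) : ReflTransGen (GridStep P) (x, y) (x', y) := by
  rcases eq_or_ne x x' with rfl | hne
  · exact .refl
  · exact .single ⟨h, h', Or.inl ⟨le_antisymm hx (Int.one_le_abs (sub_ne_zero.2 hne)), rfl⟩⟩

theorem GridStep.reflTransGen_vertical {x y y' : ℤ} (h : (x, y) ∈ P) (h' : (x, y') ∈ P)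
    (hy : |y - y'| ≤ 1) : ReflTransGen (GridStep P) (x, y) (x, y') := by
  rcases eq_or_ne y y' with rfl | hne
  · exact .refl
  · exact .single ⟨h, h', Or.inr ⟨rfl, le_antisymm hy (Int.one_le_abs (sub_ne_zero.2 hne))⟩⟩

end Steps

/-- Integer division by `2` rounds down: this is `(x, y) ↦ (⌊x/2⌋, ⌊y/2⌋)`. -/
def halve (x : ℤ × ℤ) : ℤ × ℤ := (x.1 / 2, x.2 / 2)

theorem mem_scaled_iff {Q : Set (ℤ × ℤ)} {x : ℤ × ℤ} : x ∈ Scaled Q ↔ halve x ∈ Q := by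
  constructor
  · rintro ⟨a, b, i, j, hab, hi, hj, rfl⟩
    convert hab using 2 <;> simp only [halve] <;> omega
  · intro hx
    refine ⟨x.1 / 2, x.2 / 2, x.1 % 2, x.2 % 2, hx, by omega, by omega, ?_⟩
    ext <;> simp only <;> omega

def oppositeCorner (p c : ℤ × ℤ) : ℤ × ℤ :=
  (2 * c.1 + 1 - p.1 % 2, 2 * c.2 + 1 - p.2 % 2)

section Puncture

variable {Q : Set (ℤ × ℤ)} {p : ℤ × ℤ}

theorem mem_scaled_sdiff_of_fst {x y : ℤ} (h : (x / 2, y / 2) ∈ Q) (hx : x % 2 ≠ p.1 % 2) :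
    (x, y) ∈ Scaled Q \ {p} :=
  ⟨mem_scaled_iff.2 h, fun e => hx (by rw [← e])⟩

theorem mem_scaled_sdiff_of_snd {x y : ℤ} (h : (x / 2, y / 2) ∈ Q) (hy : y % 2 ≠ p.2 % 2) :
    (x, y) ∈ Scaled Q \ {p} :=
  ⟨mem_scaled_iff.2 h, fun e => hy (by rw [← e])⟩

theorem reflTransGen_oppositeCorner {x : ℤ × ℤ} (hx : x ∈ Scaled Q \ {p}) :
    ReflTransGen (GridStep (Scaled Q \ {p})) x (oppositeCorner p (halve x)) := by
  obtain ⟨u, v⟩ := x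
  have hQ : (u / 2, v / 2) ∈ Q := mem_scaled_iff.1 hx.1
  set v' := 2 * (v / 2) + 1 - p.2 % 2
  change ReflTransGen _ (u, v) (2 * (u / 2) + 1 - p.1 % 2, v')
  have hv' : v' / 2 = v / 2 := by omega
  have hcol : (u, v') ∈ Scaled Q \ {p} := mem_scaled_sdiff_of_snd (hv' ▸ hQ) (by omega)
  have hcorner : (2 * (u / 2) + 1 - p.1 % 2, v') ∈ Scaled Q \ {p} :=
    mem_scaled_sdiff_of_snd (by convert hQ using 2; omega) (by omega)
  exact (GridStep.reflTransGen_vertical hx hcol (by rw [abs_le]; omega)).trans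
    (GridStep.reflTransGen_horizontal hcol hcorner (by rw [abs_le]; omega))

theorem reflTransGen_oppositeCorner_succ_fst {a b : ℤ} (h : (a, b) ∈ Q) (h' : (a + 1, b) ∈ Q) :
    ReflTransGen (GridStep (Scaled Q \ {p})) (oppositeCorner p (a, b))
      (oppositeCorner p (a + 1, b)) := by
  set y := 2 * b + 1 - p.2 % 2
  have hy : y / 2 = b := by omega
  have mem : ∀ x, x / 2 = a ∨ x / 2 = a + 1 → (x, y) ∈ Scaled Q \ {p} := by
    rintro x (hx | hx) <;> exact mem_scaled_sdiff_of_snd (by rwa [hx, hy]) (by omega)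
  have path : ∀ x, x / 2 = a ∨ x / 2 = a + 1 → ∀ x', x' / 2 = a ∨ x' / 2 = a + 1 →
      |x - x'| ≤ 1 → ReflTransGen (GridStep (Scaled Q \ {p})) (x, y) (x', y) :=
    fun x hx x' hx' => GridStep.reflTransGen_horizontal (mem x hx) (mem x' hx')
  exact ((path _ (by omega) (2 * a + 1) (by omega) (by rw [abs_le]; omega)).trans
    (path _ (by omega) (2 * a + 2) (by omega) (by rw [abs_le]; omega))).trans
    (path _ (by omega) _ (by omega) (by rw [abs_le]; omega))

theorem reflTransGen_oppositeCorner_succ_snd {a b : ℤ} (h : (a, b) ∈ Q) (h' : (a, b + 1) ∈ Q) :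
    ReflTransGen (GridStep (Scaled Q \ {p})) (oppositeCorner p (a, b))
      (oppositeCorner p (a, b + 1)) := by
  set x := 2 * a + 1 - p.1 % 2
  have hx : x / 2 = a := by omega
  have mem : ∀ y, y / 2 = b ∨ y / 2 = b + 1 → (x, y) ∈ Scaled Q \ {p} := by
    rintro y (hy | hy) <;> exact mem_scaled_sdiff_of_fst (by rwa [hx, hy]) (by omega)
  have path : ∀ y, y / 2 = b ∨ y / 2 = b + 1 → ∀ y', y' / 2 = b ∨ y' / 2 = b + 1 →
      |y - y'| ≤ 1 → ReflTransGen (GridStep (Scaled Q \ {p})) (x, y) (x, y') :=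
    fun y hy y' hy' => GridStep.reflTransGen_vertical (mem y hy) (mem y' hy')
  exact ((path _ (by omega) (2 * b + 1) (by omega) (by rw [abs_le]; omega)).trans
    (path _ (by omega) (2 * b + 2) (by omega) (by rw [abs_le]; omega))).trans
    (path _ (by omega) _ (by omega) (by rw [abs_le]; omega))

theorem reflTransGen_oppositeCorner_of_gridAdj {c d : ℤ × ℤ} (hc : c ∈ Q) (hd : d ∈ Q)
    (h : GridAdj c d) :
    ReflTransGen (GridStep (Scaled Q \ {p})) (oppositeCorner p c) (oppositeCorner p d) := by
  obtain ⟨a, b⟩ := c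
  obtain ⟨a', b'⟩ := d
  rcases h with ⟨h, rfl : b = b'⟩ | ⟨rfl : a = a', h⟩
  · rcases abs_eq_abs.1 (h.trans abs_one.symm) with h | h
    · obtain rfl : a = a' + 1 := by omega
      exact symm_of _ (reflTransGen_oppositeCorner_succ_fst hd hc)
    · obtain rfl : a' = a + 1 := by omega
      exact reflTransGen_oppositeCorner_succ_fst hc hd
  · rcases abs_eq_abs.1 (h.trans abs_one.symm) with h | h
    · obtain rfl : b = b' + 1 := by omega
      exact symm_of _ (reflTransGen_oppositeCorner_succ_snd hd hc)
    · obtain rfl : b' = b + 1 := by omega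
      exact reflTransGen_oppositeCorner_succ_snd hc hd

end Puncture

theorem two_scaled_no_cut_vertices_general (Q : Set (ℤ × ℤ))
    (hQ : GridConnected Q)
    (p : ℤ × ℤ) :
    GridConnected (Scaled Q \ {p}) := by
  intro x hx y hy
  have hQpath := hQ _ (mem_scaled_iff.1 hx.1) _ (mem_scaled_iff.1 hy.1)
  have hcorners : ReflTransGen (GridStep (Scaled Q \ {p}))
      (oppositeCorner p (halve x)) (oppositeCorner p (halve y)) :=
    ReflTransGen.lift' (oppositeCorner p)
      (fun c d h => reflTransGen_oppositeCorner_of_gridAdj h.1 h.2.1 h.2.2) _ _ hQpath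
  exact (reflTransGen_oppositeCorner hx).trans
    (hcorners.trans (symm_of _ (reflTransGen_oppositeCorner hy)))

theorem two_scaled_no_cut_vertices (Q : Set (ℤ × ℤ))
    (hQne : Q.Nonempty) (hQ : GridConnected Q)
    (p : ℤ × ℤ) (hp : p ∈ Scaled Q) :
    GridConnected (Scaled Q \ {p}) :=
  two_scaled_no_cut_vertices_general Q hQ p
end

section
/- Translating a 2-scaled polyomino's 2×2 block south by moving its two northern tiles south preserves connectivity at each intermediate step when the block has a southern neighbor block: in a 2-scaled polyomino P containing blocks at cells q and q−(0,1) of the scaled grid, removing the tile at the northwest corner of block q and placing it two units south (below the block) yields a connected configuration. -/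
lemma gridAdj_iff {x y x' y' : ℤ} : GridAdj (x, y) (x', y') ↔
    ((x - x' = 1 ∨ x' - x = 1) ∧ y = y') ∨ (x = x' ∧ (y - y' = 1 ∨ y' - y = 1)) := by
  simp only [GridAdj, abs_eq zero_le_one]
  omega

lemma GridAdj.symm_s13 {p q : ℤ × ℤ} (h : GridAdj p q) : GridAdj q p := by
  obtain ⟨x, y⟩ := p
  obtain ⟨x', y'⟩ := q
  rw [gridAdj_iff] at h ⊢
  omega

def GridJoined (P : Set (ℤ × ℤ)) : ℤ × ℤ → ℤ × ℤ → Prop :=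
  Relation.ReflTransGen fun a b => a ∈ P ∧ b ∈ P ∧ GridAdj a b

namespace GridJoined

variable {P : Set (ℤ × ℤ)} {p q r : ℤ × ℤ}

lemma single (hp : p ∈ P) (hq : q ∈ P) (h : GridAdj p q) : GridJoined P p q :=
  Relation.ReflTransGen.single ⟨hp, hq, h⟩

lemma trans (hpq : GridJoined P p q) (hqr : GridJoined P q r) : GridJoined P p r :=
  Relation.ReflTransGen.trans hpq hqr

lemma symm_s13 (h : GridJoined P p q) : GridJoined P q p :=
  Relation.ReflTransGen.mono (fun _ _ h => ⟨h.2.1, h.1, h.2.2.symm_s13⟩) _ _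
    (Relation.ReflTransGen.swap _ _ h)

end GridJoined

lemma GridConnected.of_anchors {Q P : Set (ℤ × ℤ)} (hQ : GridConnected Q) (f : ℤ × ℤ → ℤ × ℤ)
    (hf : ∀ u ∈ Q, ∀ v ∈ Q, GridAdj u v → GridJoined P (f u) (f v))
    (hP : ∀ p ∈ P, ∃ u ∈ Q, GridJoined P p (f u)) : GridConnected P := by
  intro p hp q hq
  obtain ⟨u, hu, hpu⟩ := hP p hp
  obtain ⟨v, hv, hqv⟩ := hP q hq
  have huv : GridJoined P (f u) (f v) :=
    Relation.ReflTransGen.lift' f (fun a b h => hf a h.1 b h.2.1 h.2.2) u v (hQ u hu v hv)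
  exact hpu.trans (huv.trans hqv.symm_s13)

def northwestCorners : Set (ℤ × ℤ) := {p | Even p.1 ∧ Odd p.2}

section SkeletonOfScaled

variable {Q P : Set (ℤ × ℤ)} {c d : ℤ}

lemma mem_scaled_sdiff_northwestCorners {i j : ℤ} (hcd : (c, d) ∈ Q) (hi : i = 0 ∨ i = 1)
    (hj : j = 0 ∨ j = 1) (hij : i = 1 ∨ j = 0) :
    (2 * c + i, 2 * d + j) ∈ Scaled Q \ northwestCorners := by
  refine ⟨⟨c, d, i, j, hcd, hi, hj, rfl⟩, fun ⟨he, ho⟩ => ?_⟩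
  rw [Int.even_iff] at he
  rw [Int.odd_iff] at ho
  omega

variable (hP : Scaled Q \ northwestCorners ⊆ P)
include hP

lemma southwest_mem (hcd : (c, d) ∈ Q) : (2 * c, 2 * d) ∈ P := by
  simpa using hP (mem_scaled_sdiff_northwestCorners (i := 0) (j := 0) hcd (by simp) (by simp)
    (by simp))

lemma southeast_mem (hcd : (c, d) ∈ Q) : (2 * c + 1, 2 * d) ∈ P := by
  simpa using hP (mem_scaled_sdiff_northwestCorners (i := 1) (j := 0) hcd (by simp) (by simp)
    (by simp))

lemma northeast_mem (hcd : (c, d) ∈ Q) : (2 * c + 1, 2 * d + 1) ∈ P :=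
  hP (mem_scaled_sdiff_northwestCorners hcd (by simp) (by simp) (by simp))

lemma gridJoined_southwest_east (hcd : (c, d) ∈ Q) (he : (c + 1, d) ∈ Q) :
    GridJoined P (2 * c, 2 * d) (2 * (c + 1), 2 * d) := by
  have hse := southeast_mem hP hcd
  exact (GridJoined.single (southwest_mem hP hcd) hse (by rw [gridAdj_iff]; omega)).trans <|
    .single hse (southwest_mem hP he) (by rw [gridAdj_iff]; omega)

lemma gridJoined_southwest_north (hcd : (c, d) ∈ Q) (hn : (c, d + 1) ∈ Q) :
    GridJoined P (2 * c, 2 * d) (2 * c, 2 * (d + 1)) := by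
  have hsw := southwest_mem hP hcd
  have hse := southeast_mem hP hcd
  have hne := northeast_mem hP hcd
  have hse' := southeast_mem hP hn
  have hsw' := southwest_mem hP hn
  exact (GridJoined.single hsw hse (by rw [gridAdj_iff]; omega)).trans <|
    (GridJoined.single hse hne (by rw [gridAdj_iff]; omega)).trans <|
    (GridJoined.single hne hse' (by rw [gridAdj_iff]; omega)).trans <|
    .single hse' hsw' (by rw [gridAdj_iff]; omega)

lemma gridJoined_southwest_of_gridAdj {u v : ℤ × ℤ} (hu : u ∈ Q) (hv : v ∈ Q)
    (huv : GridAdj u v) : GridJoined P (2 * u.1, 2 * u.2) (2 * v.1, 2 * v.2) := by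
  obtain ⟨c, d⟩ := u
  obtain ⟨c', d'⟩ := v
  rw [gridAdj_iff] at huv
  rcases huv with ⟨hc | hc, rfl⟩ | ⟨rfl, hd | hd⟩
  · obtain rfl : c = c' + 1 := by omega
    exact (gridJoined_southwest_east hP hv hu).symm_s13
  · obtain rfl : c' = c + 1 := by omega
    exact gridJoined_southwest_east hP hu hv
  · obtain rfl : d = d' + 1 := by omega
    exact (gridJoined_southwest_north hP hv hu).symm_s13
  · obtain rfl : d' = d + 1 := by omega
    exact gridJoined_southwest_north hP hu hv

lemma exists_gridJoined_southwest (hPQ : P ⊆ Scaled Q) {p : ℤ × ℤ} (hp : p ∈ P) :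
    ∃ u ∈ Q, GridJoined P p (2 * u.1, 2 * u.2) := by
  obtain ⟨c, d, i, j, hcd, hi, hj, rfl⟩ := hPQ hp
  refine ⟨(c, d), hcd, ?_⟩
  have hsw := southwest_mem hP hcd
  have hse := southeast_mem hP hcd
  rcases hi with rfl | rfl <;> rcases hj with rfl | rfl <;> simp only [add_zero] at hp ⊢
  · exact .refl
  · exact .single hp hsw (by rw [gridAdj_iff]; omega)
  · exact .single hp hsw (by rw [gridAdj_iff]; omega)
  · exact (GridJoined.single hp hse (by rw [gridAdj_iff]; omega)).trans
      (.single hse hsw (by rw [gridAdj_iff]; omega))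

theorem GridConnected.of_scaled_sdiff_northwestCorners_subset (hQ : GridConnected Q)
    (hPQ : P ⊆ Scaled Q) : GridConnected P :=
  hQ.of_anchors (fun u => (2 * u.1, 2 * u.2))
    (fun _ hu _ hv huv => gridJoined_southwest_of_gridAdj hP hu hv huv)
    (fun _ hp => exists_gridJoined_southwest hP hPQ hp)

end SkeletonOfScaled

theorem remove_northwest_tile_connected_general (Q : Set (ℤ × ℤ)) (hQ : GridConnected Q)
    (a b : ℤ) :
    GridConnected (Scaled Q \ {(2 * a, 2 * b + 1)}) :=
  GridConnected.of_scaled_sdiff_northwestCorners_subset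
    (Set.sdiff_subset_sdiff_right
      (Set.singleton_subset_iff.2 ⟨even_two_mul a, odd_two_mul_add_one b⟩))
    hQ Set.sdiff_subset

theorem remove_northwest_tile_connected (Q : Set (ℤ × ℤ)) (hQ : GridConnected Q)
    (a b : ℤ) (hab : (a, b) ∈ Q) (hab' : (a, b - 1) ∈ Q) :
    GridConnected (Scaled Q \ {(2 * a, 2 * b + 1)}) :=
  remove_northwest_tile_connected_general Q hQ a b
end
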